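/- Let D be a countably complete filter on a set Y, let f : Y → Ord, and suppose Y = ⋃_{n<ω} Y_n. Then rk_D(f) = min{rk_{D+Y_n}(f) : n < ω and Y_n ∈ D⁺}. (In particular at least one Y_n is D-positive, and the minimum is attained.) -/
import Mathlib


/-- `f <_D g` iff `{y | f y < g y} ∈ D`. -/
def ltD {Y : Type} (D : Filter Y) (f g : Y → Ordinal) : Prop :=
  {y | f y < g y} ∈ D

/-- The rank `rk_D f` of `f : Y → Ord` with respect to the (well-founded, for countably
complete `D`) relation `<_D`. -/
noncomputable def rkD {Y : Type} (D : Filter Y) (f : Y → Ordinal) : Ordinal.{1} :=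
  haveI := Classical.dec
  if h : Acc (ltD D) f then h.rank else 0

section Aux

variable {Y : Type}

/-- `<_D` is well-founded for countably complete `D`. -/
theorem ltD_wf (D : Filter Y) [CountableInterFilter D] [D.NeBot] :
    WellFounded (ltD D) := by
  haveI : IsTrans (Y → Ordinal) (ltD D) := ⟨fun a b c hab hbc =>
    Filter.mem_of_superset (Filter.inter_mem hab hbc)
      fun y hy => show a y < c y from lt_trans hy.1 hy.2⟩
  haveI : IsIrrefl (Y → Ordinal) (ltD D) := ⟨fun a ha => by
    have : {y | a y < a y} = (∅ : Set Y) := by ext y; simp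
    rw [ltD, this] at ha
    exact Filter.empty_notMem D ha⟩
  haveI : IsStrictOrder (Y → Ordinal) (ltD D) := ⟨⟩
  rw [RelEmbedding.wellFounded_iff_isEmpty]
  constructor
  intro e
  have hmem : ∀ n : ℕ, {y | e (n + 1) y < e n y} ∈ D := fun n =>
    e.map_rel_iff.2 (Nat.lt_succ_self n)
  have hT : (⋂ n, {y | e (n + 1) y < e n y}) ∈ D := countable_iInter_mem.2 hmem
  obtain ⟨y, hy⟩ := Filter.nonempty_of_mem hT
  have hy' : ∀ n : ℕ, e (n + 1) y < e n y := fun n => Set.mem_iInter.1 hy n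
  exact (RelEmbedding.wellFounded_iff_isEmpty.1 wellFounded_lt).false
    (RelEmbedding.natGT (fun n => e n y) hy')

theorem rkD_eq_rank (D : Filter Y) [CountableInterFilter D] [D.NeBot] (f : Y → Ordinal) :
    rkD D f = ((ltD_wf D).apply f).rank := by
  unfold rkD
  exact dif_pos ((ltD_wf D).apply f)

theorem rkD_lt (D : Filter Y) [CountableInterFilter D] [D.NeBot] {g f : Y → Ordinal}
    (h : ltD D g f) : rkD D g < rkD D f := by
  rw [rkD_eq_rank, rkD_eq_rank]
  exact Acc.rank_lt_of_rel ((ltD_wf D).apply f) h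

theorem rkD_le_of_mem (D : Filter Y) [CountableInterFilter D] [D.NeBot] {g h : Y → Ordinal}
    (hle : {y | g y ≤ h y} ∈ D) : rkD D g ≤ rkD D h := by
  rw [rkD_eq_rank, rkD_eq_rank]
  set hg := (ltD_wf D).apply g
  set hh := (ltD_wf D).apply h
  rw [hg.rank_eq]
  refine Ordinal.iSup_le ?_
  rintro ⟨g', hg'⟩
  rw [Order.succ_le_iff]
  have h1 : ltD D g' h :=
    Filter.mem_of_superset (Filter.inter_mem hg' hle)
      fun y hy => show g' y < h y from lt_of_lt_of_le hy.1 hy.2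
  exact Acc.rank_lt_of_rel hh h1

theorem rkD_mono (D E : Filter Y) [CountableInterFilter D] [D.NeBot]
    [CountableInterFilter E] [E.NeBot] (hDE : E ≤ D) (f : Y → Ordinal) :
    rkD D f ≤ rkD E f := by
  rw [rkD_eq_rank, rkD_eq_rank]
  have key : ∀ a : Y → Ordinal, ∀ hs : Acc (ltD E) a, ∀ _ : Acc (ltD D) a,
      ((ltD_wf D).apply a).rank ≤ hs.rank := by
    intro a hs
    induction hs with
    | intro a ha ih =>
      intro hr
      rw [((ltD_wf D).apply a).rank_eq]
      refine Ordinal.iSup_le ?_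
      rintro ⟨b, hb⟩
      rw [Order.succ_le_iff]
      have hsb : ltD E b a := hDE hb
      calc ((ltD_wf D).apply a |>.inv hb).rank = ((ltD_wf D).apply b).rank := rfl
        _ ≤ (ha b hsb).rank := ih b hsb ((ltD_wf D).apply b)
        _ < (Acc.intro a ha).rank := Acc.rank_lt_of_rel (Acc.intro a ha) hsb
  exact key f ((ltD_wf E).apply f) ((ltD_wf D).apply f)

theorem rkD_exists_pred (D : Filter Y) [CountableInterFilter D] [D.NeBot]
    {f : Y → Ordinal} {α : Ordinal} (h : α < rkD D f) :
    ∃ g, ltD D g f ∧ α ≤ rkD D g := by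
  rw [rkD_eq_rank, ((ltD_wf D).apply f).rank_eq, Ordinal.lt_iSup_iff] at h
  obtain ⟨⟨g, hg⟩, hlt⟩ := h
  refine ⟨g, hg, ?_⟩
  rw [rkD_eq_rank]
  exact Order.lt_succ_iff.1 hlt

theorem main_disjoint (D : Filter Y) [CountableInterFilter D] [D.NeBot]
    (Z : ℕ → Set Y) (hcov : ∀ y, ∃ n, y ∈ Z n)
    (hdisj : ∀ m n, m ≠ n → ∀ y, y ∈ Z m → y ∈ Z n → False)
    (f : Y → Ordinal) :
    ∃ n, (Z n)ᶜ ∉ D ∧ rkD (D ⊓ Filter.principal (Z n)) f ≤ rkD D f := by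
  classical
  suffices H : ∀ α : Ordinal.{1}, ∀ f : Y → Ordinal, rkD D f = α →
      ∃ n, (Z n)ᶜ ∉ D ∧ rkD (D ⊓ Filter.principal (Z n)) f ≤ rkD D f by
    exact H _ f rfl
  intro α
  induction α using Ordinal.induction with
  | h α IH =>
  intro f hα
  by_contra hcon
  push_neg at hcon
  -- hcon : ∀ n, (Z n)ᶜ ∉ D → rkD D f < rkD (D ⊓ 𝓟 (Z n)) f
  have key : ∀ n, ∃ (g : Y → Ordinal) (S : Set Y), S ∈ D ∧
      ((Z n)ᶜ ∈ D → S ⊆ (Z n)ᶜ) ∧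
      ((Z n)ᶜ ∉ D → (∀ y ∈ S ∩ Z n, g y < f y) ∧
        α ≤ rkD (D ⊓ Filter.principal (Z n)) g) := by
    intro n
    by_cases hpos : (Z n)ᶜ ∉ D
    · haveI : (D ⊓ Filter.principal (Z n)).NeBot :=
        ⟨fun h => hpos (Filter.inf_principal_eq_bot.1 h)⟩
      have hlt : α < rkD (D ⊓ Filter.principal (Z n)) f := hα ▸ hcon n hpos
      obtain ⟨g, hg, hrk⟩ := rkD_exists_pred _ hlt
      have hg' : {x | x ∈ Z n → g x < f x} ∈ D := Filter.mem_inf_principal.1 hg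
      exact ⟨g, _, hg', fun h => absurd h hpos,
        fun _ => ⟨fun y hy => hy.1 hy.2, hrk⟩⟩
    · push_neg at hpos
      exact ⟨f, (Z n)ᶜ, hpos, fun _ => subset_rfl, fun h => absurd hpos h⟩
  choose g S hS hSneg hSpos using key
  have hT : (⋂ n, S n) ∈ D := countable_iInter_mem.2 hS
  have hidxmem : ∀ y, y ∈ Z (Nat.find (hcov y)) := fun y => Nat.find_spec (hcov y)
  set G : Y → Ordinal := fun y => g (Nat.find (hcov y)) y with hGdef
  have hpos_idx : ∀ y ∈ ⋂ n, S n, (Z (Nat.find (hcov y)))ᶜ ∉ D := by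
    intro y hy hmem
    exact hSneg _ hmem (Set.mem_iInter.1 hy _) (hidxmem y)
  have hGf : ltD D G f := by
    refine Filter.mem_of_superset hT ?_
    intro y hy
    exact (hSpos _ (hpos_idx y hy)).1 y ⟨Set.mem_iInter.1 hy _, hidxmem y⟩
  have hGlt : rkD D G < α := hα ▸ rkD_lt D hGf
  obtain ⟨m, hmpos, hm⟩ := IH (rkD D G) hGlt G rfl
  haveI : (D ⊓ Filter.principal (Z m)).NeBot :=
    ⟨fun h => hmpos (Filter.inf_principal_eq_bot.1 h)⟩
  have hGgm : {y | g m y ≤ G y} ∈ D ⊓ Filter.principal (Z m) := by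
    rw [Filter.mem_inf_principal]
    refine Filter.mem_of_superset hT ?_
    intro y hy hyZ
    have hidx : Nat.find (hcov y) = m := by
      by_contra hne
      exact hdisj _ _ hne y (hidxmem y) hyZ
    show g m y ≤ G y
    rw [hGdef]
    simp only [hidx]
    exact le_rfl
  have h1 : α ≤ rkD (D ⊓ Filter.principal (Z m)) (g m) := (hSpos m hmpos).2
  have h2 : rkD (D ⊓ Filter.principal (Z m)) (g m) ≤ rkD (D ⊓ Filter.principal (Z m)) G :=
    rkD_le_of_mem _ hGgm
  exact absurd ((h1.trans h2).trans hm) (not_le.2 hGlt)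

end Aux

/-- if `D` is a countably complete filter on `Y`, `f : Y → Ord`, and
`Y = ⋃_{n<ω} Y_n`, then `rk_D f = min{rk_{D+Y_n} f : n < ω, Y_n ∈ D⁺}`; in particular
some `Y_n` is `D`-positive and the minimum is attained.  Here `Z ∈ D⁺` iff `Zᶜ ∉ D`,
and `D + Z` is the filter generated by `D ∪ {Z}`. -/
theorem stmt2 {Y : Type} [Nonempty Y] (D : Filter Y)
    (hcc : CountableInterFilter D) (hne : D.NeBot)
    (f : Y → Ordinal) (Yn : ℕ → Set Y) (hcov : ⋃ n, Yn n = Set.univ) :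
    (∃ n, (Yn n)ᶜ ∉ D ∧ rkD D f = rkD (D ⊓ Filter.principal (Yn n)) f) ∧
      ∀ n, (Yn n)ᶜ ∉ D → rkD D f ≤ rkD (D ⊓ Filter.principal (Yn n)) f := by
  haveI := hcc; haveI := hne
  have hge : ∀ n, (Yn n)ᶜ ∉ D → rkD D f ≤ rkD (D ⊓ Filter.principal (Yn n)) f := by
    intro n hn
    haveI : (D ⊓ Filter.principal (Yn n)).NeBot :=
      ⟨fun h => hn (Filter.inf_principal_eq_bot.1 h)⟩
    exact rkD_mono _ _ inf_le_left f
  refine ⟨?_, hge⟩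
  set Z : ℕ → Set Y := disjointed Yn with hZ
  have hZsub : ∀ n, Z n ⊆ Yn n := fun n => disjointed_subset Yn n
  have hZcov : ∀ y, ∃ n, y ∈ Z n := by
    intro y
    have : y ∈ ⋃ n, Z n := by
      rw [hZ, iUnion_disjointed, hcov]; trivial
    exact Set.mem_iUnion.1 this
  have hZdisj : ∀ m n, m ≠ n → ∀ y, y ∈ Z m → y ∈ Z n → False := by
    intro m n hmn y hym hyn
    exact Set.disjoint_left.1 (disjoint_disjointed Yn hmn) hym hyn
  obtain ⟨m, hZpos, hZle⟩ := main_disjoint D Z hZcov hZdisj f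
  have hYpos : (Yn m)ᶜ ∉ D := fun h =>
    hZpos (Filter.mem_of_superset h (Set.compl_subset_compl.2 (hZsub m)))
  haveI : (D ⊓ Filter.principal (Z m)).NeBot :=
    ⟨fun h => hZpos (Filter.inf_principal_eq_bot.1 h)⟩
  haveI : (D ⊓ Filter.principal (Yn m)).NeBot :=
    ⟨fun h => hYpos (Filter.inf_principal_eq_bot.1 h)⟩
  have hYZ : rkD (D ⊓ Filter.principal (Yn m)) f ≤ rkD (D ⊓ Filter.principal (Z m)) f :=
    rkD_mono _ _ (inf_le_inf_left D (Filter.principal_mono.2 (hZsub m))) f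
  exact ⟨m, hYpos, le_antisymm (hge m hYpos) (hYZ.trans hZle)⟩
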